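/- For an alphabet of size n ≥ 2, write l = 3^m · l₁ with l₁ ≥ 2, gcd(3, l₁) = 1, m ≥ 0. If l₁ is odd, then ε₂(n,l) = n^{3l} − n^l − π_n(3l); if l₁ is even, then ε₂(n,l) = n^{3l} − n^l − π_n(3l) − π_n(3l/2). Here ε₂(n,l) = Σ_{d ∈ Λ(l)} π_n(3l/d) with Λ(l) = {d : d | l, 3 ∤ d, d ≥ 4}. -/

import Mathlib

/-!
Every nonempty word is a power of a primitive word, and of only one: if `pw u a = pw v b`, then
`|u|` and `|v|` are rotation periods of that word, hence so is `gcd |u| |v|`, so both `u` and `v`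
are powers of its prefix of that length, and primitivity makes each equal to that prefix.
Sorting the words of length `k` by their primitive root gives `∑_{d ∣ k} π_n(d) = n^k`.

For `l = 3^m l₁` with `3 ∤ l₁`, the divisors of `3l` that do not divide `l` are the `3^(m+1) d`
with `d ∣ l₁`, i.e. the `3l/d` with `d ∣ l₁`; hence `∑_{d ∣ l₁} π_n(3l/d) = n^(3l) - n^l`.
The divisors of `l` prime to `3` are those of `l₁`, and the ones below `4` are `1`, and `2` when
`l₁` is even; removing their terms from this sum leaves `ε₂(n,l)`.
-/

variable {A : Type*}

/-- k-fold concatenation of a word with itself. -/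
def pw (w : List A) : ℕ → List A
  | 0 => []
  | n + 1 => w ++ pw w n

/-- A nonempty word is primitive if it is not a proper power. -/
def Primitive (w : List A) : Prop :=
  w ≠ [] ∧ ∀ (v : List A) (m : ℕ), w = pw v m → m = 1

/-- Number of primitive words of length k over an n-letter alphabet. -/
noncomputable def piw (n k : ℕ) : ℕ :=
  Nat.card {w : List (Fin n) // w.length = k ∧ Primitive w}

/-- ε₂(n,l) = Σ_{d ∈ Λ(l)} π_n(3l/d). -/
noncomputable def eps2S (n l : ℕ) : ℕ :=
  ∑ d ∈ l.divisors.filter (fun d => 4 ≤ d ∧ ¬ 3 ∣ d), piw n (3 * l / d)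

theorem pw_nil (k : ℕ) : pw ([] : List A) k = [] := by
  induction k <;> simp [pw, *]

theorem pw_one (w : List A) : pw w 1 = w := by
  simp [pw]

theorem length_pw (w : List A) (k : ℕ) : (pw w k).length = k * w.length := by
  induction k with
  | zero => simp [pw]
  | succ k ih => simp [pw, ih, Nat.succ_mul, Nat.add_comm]

theorem pw_add (w : List A) (a b : ℕ) : pw w (a + b) = pw w a ++ pw w b := by
  induction a with
  | zero => simp [pw]
  | succ a ih => rw [Nat.succ_add, pw, pw, ih, List.append_assoc]

theorem pw_append_self (w : List A) (k : ℕ) : pw w k ++ w = w ++ pw w k := by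
  induction k with
  | zero => simp [pw]
  | succ k ih => rw [pw, List.append_assoc, ih]

theorem pw_mul (w : List A) (a b : ℕ) : pw w (a * b) = pw (pw w a) b := by
  induction b with
  | zero => simp [pw]
  | succ b ih => rw [Nat.mul_succ, pw_add, ih, pw, pw_append_self]

theorem take_pw (w : List A) {j k : ℕ} (h : j ≤ k) :
    (pw w k).take (j * w.length) = pw w j := by
  obtain ⟨c, rfl⟩ := Nat.exists_eq_add_of_le h
  rw [pw_add, ← length_pw, List.take_left]

theorem rotate_pw_length (w : List A) (k : ℕ) : (pw w k).rotate w.length = pw w k := by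
  cases k with
  | zero => simp [pw]
  | succ k => rw [pw, List.rotate_append_length_eq, pw_append_self]

theorem isPeriodicPt_rotate_one_iff {w : List A} {p : ℕ} :
    Function.IsPeriodicPt (fun l : List A => l.rotate 1) p w ↔ w.rotate p = w := by
  suffices h : ∀ p, (fun l : List A => l.rotate 1)^[p] w = w.rotate p by
    rw [Function.IsPeriodicPt, Function.IsFixedPt, h]
  intro p
  induction p with
  | zero => simp
  | succ p ih => rw [Function.iterate_succ_apply', ih, List.rotate_rotate]

theorem eq_pw_of_append_comm {t s : List A} (ht : t ≠ []) (hc : t ++ s = s ++ t)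
    (hd : t.length ∣ s.length) : s = pw t (s.length / t.length) := by
  obtain rfl | hs := eq_or_ne s []
  · simp [pw]
  have hpos : 0 < t.length := List.length_pos_iff.2 ht
  have hle : t.length ≤ s.length := Nat.le_of_dvd (List.length_pos_iff.2 hs) hd
  obtain ⟨s', rfl⟩ : t <+: s :=
    List.prefix_of_prefix_length_le (hc ▸ List.prefix_append t s) (List.prefix_append s t) hle
  have hc' : t ++ s' = s' ++ t := by
    rw [List.append_assoc] at hc
    exact List.append_cancel_left hc
  have hd' : t.length ∣ s'.length := by
    rwa [List.length_append, Nat.dvd_add_right dvd_rfl] at hd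
  have hs' := eq_pw_of_append_comm ht hc' hd'
  rw [List.length_append, Nat.add_div_left _ hpos, pw, ← hs']
termination_by s.length
decreasing_by subst_vars; simp only [List.length_append]; omega

theorem eq_pw_take_of_rotate_eq {w : List A} {p : ℕ} (hp : 0 < p) (hd : p ∣ w.length)
    (h : w.rotate p = w) : w = pw (w.take p) (w.length / p) := by
  obtain rfl | hw := eq_or_ne w []
  · simp [pw]
  have hpw : p ≤ w.length := Nat.le_of_dvd (List.length_pos_iff.2 hw) hd
  have htake : (w.take p).length = p := List.length_take_of_le hpw
  have hcomm : w.take p ++ w.drop p = w.drop p ++ w.take p := by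
    rw [List.take_append_drop, ← List.rotate_eq_drop_append_take hpw, h]
  have hdrop := eq_pw_of_append_comm (List.ne_nil_of_length_pos (by rw [htake]; exact hp)) hcomm
    (by rw [htake, List.length_drop]; exact Nat.dvd_sub hd dvd_rfl)
  have hlen : w.length = p + (w.drop p).length := by
    rw [List.length_drop]; omega
  conv_lhs => rw [← List.take_append_drop p w, hdrop]
  rw [htake, hlen, Nat.add_div_left _ hp, pw]

theorem Primitive.eq_take_of_rotate_eq {x w : List A} {c g : ℕ} (hx : Primitive x) (hc : 1 ≤ c)
    (hw : w = pw x c) (hg : 0 < g) (hgx : g ∣ x.length) (h : w.rotate g = w) :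
    x = w.take g := by
  have hxw : x.length ≤ w.length := by
    rw [hw, length_pw]; exact Nat.le_mul_of_pos_left _ hc
  have hgw : g ∣ w.length := by
    rw [hw, length_pw]; exact hgx.mul_left c
  have hgle : g ≤ x.length := Nat.le_of_dvd (List.length_pos_iff.2 hx.1) hgx
  have htake : (w.take g).length = g := List.length_take_of_le (hgle.trans hxw)
  have hx_pw : x = pw (w.take g) (x.length / g) := calc
    x = w.take x.length := by
      obtain ⟨c, rfl⟩ := Nat.exists_eq_add_of_le' hc
      rw [hw, pw, List.take_left]
    _ = (pw (w.take g) (w.length / g)).take (x.length / g * (w.take g).length) := by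
      rw [htake, Nat.div_mul_cancel hgx, ← eq_pw_take_of_rotate_eq hg hgw h]
    _ = pw (w.take g) (x.length / g) := take_pw _ (Nat.div_le_div_right hxw)
  rw [hx_pw, hx.2 _ _ hx_pw, pw_one]

theorem Primitive.eq_of_pw_eq {u v : List A} {a b : ℕ} (hu : Primitive u) (hv : Primitive v)
    (ha : 1 ≤ a) (hb : 1 ≤ b) (h : pw u a = pw v b) : u = v := by
  have hg : 0 < u.length.gcd v.length := Nat.gcd_pos_of_pos_left _ (List.length_pos_iff.2 hu.1)
  have hrot : (pw u a).rotate (u.length.gcd v.length) = pw u a :=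
    isPeriodicPt_rotate_one_iff.1 <| (isPeriodicPt_rotate_one_iff.2 (rotate_pw_length u a)).gcd
      (isPeriodicPt_rotate_one_iff.2 (h ▸ rotate_pw_length v b))
  exact (hu.eq_take_of_rotate_eq ha rfl hg (Nat.gcd_dvd_left _ _) hrot).trans
    (hv.eq_take_of_rotate_eq hb h hg (Nat.gcd_dvd_right _ _) hrot).symm

theorem exists_primitive_pw_eq {w : List A} (hw : w ≠ []) :
    ∃ u k, Primitive u ∧ 1 ≤ k ∧ w = pw u k := by
  by_cases hp : Primitive w
  · exact ⟨w, 1, hp, le_rfl, (pw_one w).symm⟩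
  obtain ⟨v, m, hvm, hm⟩ : ∃ v m, w = pw v m ∧ m ≠ 1 := by
    simpa [Primitive, hw] using hp
  have hv : v ≠ [] := by rintro rfl; exact hw (hvm.trans (pw_nil m))
  have hm2 : 2 ≤ m := by
    rcases m with _ | _ | m
    · exact absurd hvm hw
    · exact absurd rfl hm
    · omega
  have hshorter : v.length < w.length := by
    rw [hvm, length_pw]
    exact lt_mul_left (List.length_pos_iff.2 hv) hm2
  obtain ⟨u, k, hu, hk, rfl⟩ := exists_primitive_pw_eq hv
  exact ⟨u, k * m, hu, Nat.mul_pos hk (by omega), by rw [hvm, pw_mul]⟩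
termination_by w.length

instance (n k : ℕ) : Finite {w : List (Fin n) // w.length = k ∧ Primitive w} :=
  Finite.of_injective (β := List.Vector (Fin n) k) (fun w => ⟨w.1, w.2.1⟩)
    fun _ _ h => Subtype.ext (Subtype.ext_iff.1 h :)

theorem sum_divisors_piw (n : ℕ) {k : ℕ} (hk : k ≠ 0) : ∑ d ∈ k.divisors, piw n d = n ^ k := by
  have hexp : ∀ d ∈ k.divisors, 1 ≤ k / d := fun d hd =>
    Nat.div_pos (Nat.divisor_le hd) (Nat.pos_of_mem_divisors hd)
  let power (x : Σ d : k.divisors, {u : List (Fin n) // u.length = d ∧ Primitive u}) :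
      List.Vector (Fin n) k :=
    ⟨pw x.2.1 (k / x.1), by
      rw [length_pw, x.2.2.1, Nat.div_mul_cancel (Nat.dvd_of_mem_divisors x.1.2)]⟩
  have hbij : Function.Bijective power := by
    constructor
    · rintro ⟨⟨d, hd⟩, ⟨u, hud, hu⟩⟩ ⟨⟨d', hd'⟩, ⟨u', hud', hu'⟩⟩ h
      obtain rfl : u = u' :=
        hu.eq_of_pw_eq hu' (hexp _ hd) (hexp _ hd') (congrArg Subtype.val h)
      obtain rfl : d = d' := hud.symm.trans hud'
      rfl
    · rintro ⟨w, hw⟩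
      have hw0 : w ≠ [] := by rintro rfl; exact hk hw.symm
      obtain ⟨u, j, hu, -, rfl⟩ := exists_primitive_pw_eq hw0
      have hk' : k = j * u.length := by rw [← hw, length_pw]
      have hd : u.length ∈ k.divisors := Nat.mem_divisors.2 ⟨hk' ▸ dvd_mul_left _ _, hk⟩
      refine ⟨⟨⟨u.length, hd⟩, ⟨u, rfl, hu⟩⟩, Subtype.ext ?_⟩
      simp only [power, hk', Nat.mul_div_cancel _ (List.length_pos_iff.2 hu.1)]
  calc ∑ d ∈ k.divisors, piw n d
      = Nat.card (Σ d : k.divisors, {u : List (Fin n) // u.length = d ∧ Primitive u}) := by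
        rw [Nat.card_sigma, ← Finset.sum_coe_sort k.divisors (piw n)]
        rfl
    _ = n ^ k := by rw [Nat.card_eq_of_bijective _ hbij]; simp

section Divisors

variable {M : Type*} [AddCommMonoid M] {p l : ℕ}

theorem Nat.sum_divisors_prime_pow_mul (hp : p.Prime) (hpl : ¬ p ∣ l) (k : ℕ) (f : ℕ → M) :
    ∑ e ∈ (p ^ k * l).divisors, f e =
      ∑ i ∈ Finset.range (k + 1), ∑ d ∈ l.divisors, f (p ^ i * d) := by
  have hcop : (p ^ k).Coprime l := Nat.Coprime.pow_left k ((hp.coprime_iff_not_dvd).2 hpl)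
  rw [Nat.divisors_mul, Finset.mul_def,
    Finset.sum_image fun x hx y hy h => hcop.mul_injOn_divisors hx hy h, Finset.sum_product,
    Nat.sum_divisors_prime_pow hp]

theorem Nat.sum_divisors_prime_pow_succ_mul (hp : p.Prime) (hpl : ¬ p ∣ l) (k : ℕ) (f : ℕ → M) :
    ∑ e ∈ (p ^ (k + 1) * l).divisors, f e =
      ∑ e ∈ (p ^ k * l).divisors, f e + ∑ d ∈ l.divisors, f (p ^ (k + 1) * l / d) := by
  rw [Nat.sum_divisors_prime_pow_mul hp hpl, Nat.sum_divisors_prime_pow_mul hp hpl,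
    Finset.sum_range_succ, ← Nat.sum_div_divisors l (fun d => f (p ^ (k + 1) * d))]
  congr 1
  refine Finset.sum_congr rfl fun d hd => ?_
  rw [Nat.mul_div_assoc _ (Nat.dvd_of_mem_divisors hd)]

theorem Nat.filter_not_dvd_divisors_prime_pow_mul (hp : p.Prime) (hpl : ¬ p ∣ l) (k : ℕ) :
    (p ^ k * l).divisors.filter (¬ p ∣ ·) = l.divisors := by
  have hl : l ≠ 0 := by rintro rfl; exact hpl (dvd_zero p)
  ext d
  simp only [Finset.mem_filter, Nat.mem_divisors]
  constructor
  · rintro ⟨⟨hd, -⟩, hpd⟩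
    have hcop : d.Coprime (p ^ k) := Nat.Coprime.pow_right k ((hp.coprime_iff_not_dvd).2 hpd).symm
    exact ⟨hcop.dvd_of_dvd_mul_left hd, hl⟩
  · rintro ⟨hd, -⟩
    exact ⟨⟨dvd_mul_of_dvd_right hd _, mul_ne_zero (pow_ne_zero _ hp.ne_zero) hl⟩,
      fun hpd => hpl (hpd.trans hd)⟩

theorem Nat.sum_divisors_filter_lt_four (hl : ¬ 3 ∣ l) (f : ℕ → M) :
    ∑ d ∈ l.divisors.filter (· < 4), f d = f 1 + if 2 ∣ l then f 2 else 0 := by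
  have hl0 : l ≠ 0 := by rintro rfl; exact hl (dvd_zero 3)
  have hsmall : l.divisors.filter (· < 4) = (Finset.range 4).filter (· ∣ l) := by
    ext d
    simp only [Finset.mem_filter, Nat.mem_divisors, Finset.mem_range]
    tauto
  rw [hsmall, Finset.sum_filter]
  simp [Finset.sum_range_succ, hl, hl0]

end Divisors

theorem eps2S_eq_sum_divisors (n : ℕ) {l m l₁ : ℕ} (hl : l = 3 ^ m * l₁) (h3 : ¬ 3 ∣ l₁) :
    eps2S n l = ∑ d ∈ l₁.divisors.filter (4 ≤ ·), piw n (3 * l / d) := by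
  rw [eps2S, hl, ← Nat.filter_not_dvd_divisors_prime_pow_mul Nat.prime_three h3 m,
    Finset.filter_filter]
  simp only [and_comm]

theorem eps2S_formula_general (n l m l₁ : ℕ) (hl : l = 3 ^ m * l₁) (hgcd : Nat.gcd 3 l₁ = 1) :
    (Odd l₁ → (eps2S n l : ℤ) = (n : ℤ) ^ (3 * l) - (n : ℤ) ^ l - (piw n (3 * l) : ℤ)) ∧
    (Even l₁ → (eps2S n l : ℤ) =
        (n : ℤ) ^ (3 * l) - (n : ℤ) ^ l - (piw n (3 * l) : ℤ) - (piw n (3 * l / 2) : ℤ)) := by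
  have h3 : ¬ 3 ∣ l₁ := (Nat.prime_three.coprime_iff_not_dvd).1 hgcd
  have hl0 : l ≠ 0 := hl ▸ mul_ne_zero (by positivity) (by rintro rfl; exact h3 (dvd_zero 3))
  have hsum : n ^ (3 * l) = n ^ l + ∑ d ∈ l₁.divisors, piw n (3 * l / d) := by
    rw [← sum_divisors_piw n hl0, ← sum_divisors_piw n (by omega), hl, ← mul_assoc, ← pow_succ',
      Nat.sum_divisors_prime_pow_succ_mul Nat.prime_three h3]
  have hsplit : ∑ d ∈ l₁.divisors, piw n (3 * l / d) =
      eps2S n l + (piw n (3 * l) + if 2 ∣ l₁ then piw n (3 * l / 2) else 0) := by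
    rw [eps2S_eq_sum_divisors n hl h3, ← Finset.sum_filter_add_sum_filter_not l₁.divisors (4 ≤ ·)]
    congr 1
    simpa only [not_le, Nat.div_one] using
      Nat.sum_divisors_filter_lt_four h3 (fun d => piw n (3 * l / d))
  have key : (n : ℤ) ^ (3 * l) = n ^ l + eps2S n l + piw n (3 * l) +
      ((if 2 ∣ l₁ then piw n (3 * l / 2) else 0 : ℕ) : ℤ) := by
    exact_mod_cast hsum.trans (by rw [hsplit]; ring)
  refine ⟨fun hodd => ?_, fun heven => ?_⟩
  · rw [if_neg (Nat.not_even_iff_odd.2 hodd ∘ even_iff_two_dvd.2)] at key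
    push_cast at key
    linarith
  · rw [if_pos (even_iff_two_dvd.1 heven)] at key
    linarith

theorem eps2S_formula (n l m l₁ : ℕ) (hn : 2 ≤ n) (hl : l = 3 ^ m * l₁)
    (hl₁ : 2 ≤ l₁) (hgcd : Nat.gcd 3 l₁ = 1) :
    (Odd l₁ → (eps2S n l : ℤ) = (n : ℤ) ^ (3 * l) - (n : ℤ) ^ l - (piw n (3 * l) : ℤ)) ∧
    (Even l₁ → (eps2S n l : ℤ) =
        (n : ℤ) ^ (3 * l) - (n : ℤ) ^ l - (piw n (3 * l) : ℤ) - (piw n (3 * l / 2) : ℤ)) :=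
  eps2S_formula_general n l m l₁ hl hgcd
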